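/- For s ∈ ℕ, setting D_{2,s} = z∂_z² + (β+1)∂_z - s(s+2β)/(4z) and B_{α,β,s} = D₁² + (α+β+1)D₁ - D_{2,s} with D₁ = z∂_z, the conjugation identity z^{-s/2} ∘ B_{α,β,s} ∘ z^{s/2} = B_{α,β+s} + λ^{α+β}_{n+s/2} - λ^{α+β+s}_n holds, where λ^σ_x = x(x+σ+1) and B_{α,β+s} = z(z-1)∂_z² + (z(α+β+s+2)-(β+s+1))∂_z; note λ^{α+β}_{n+s/2} - λ^{α+β+s}_n = (s/2)(s/2 + α + β + 1) is independent of n. -/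

import Mathlib

/-- The operator `D₁ = z ∂_z`. -/
noncomputable def D1 (f : ℝ → ℝ) : ℝ → ℝ := fun z => z * deriv f z

/-- The operator `D_{2,s} = z ∂_z² + (β+1) ∂_z - s(s+2β)/(4z)`. -/
noncomputable def D2s (β : ℝ) (s : ℕ) (f : ℝ → ℝ) : ℝ → ℝ :=
  fun z => z * deriv (deriv f) z + (β + 1) * deriv f z
    - ((s : ℝ) * ((s : ℝ) + 2 * β)) / (4 * z) * f z

/-- The operator `B_{α,β,s} = D₁² + (α+β+1) D₁ - D_{2,s}`. -/
noncomputable def Babs (α β : ℝ) (s : ℕ) (f : ℝ → ℝ) : ℝ → ℝ :=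
  fun z => D1 (D1 f) z + (α + β + 1) * D1 f z - D2s β s f z

theorem conjugation_identity (α β : ℝ) (s : ℕ) (f : ℝ → ℝ)
    (hf : ContDiff ℝ (⊤ : ℕ∞) f) (z : ℝ) (hz : 0 < z) :
    z ^ (-(s : ℝ) / 2) * Babs α β s (fun w => w ^ ((s : ℝ) / 2) * f w) z
      = (z * (z - 1) * deriv (deriv f) z
          + (z * (α + (β + (s : ℝ)) + 2) - ((β + (s : ℝ)) + 1)) * deriv f z)
        + ((s : ℝ) / 2) * ((s : ℝ) / 2 + α + β + 1) * f z := by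
  have hz0 : z ≠ 0 := hz.ne'
  set c : ℝ := (s : ℝ) / 2 with hc
  set g : ℝ → ℝ := fun w => w ^ c * f w with hg
  have hfi : ContDiff ℝ ((⊤ : ℕ∞) : WithTop ℕ∞) f := hf.of_le (by simp)
  have hfd : Differentiable ℝ f := (contDiff_infty_iff_deriv.mp hfi).1
  have hfd' : Differentiable ℝ (deriv f) :=
    (contDiff_infty_iff_deriv.mp (contDiff_infty_iff_deriv.mp hfi).2).1
  -- derivative of g at every x > 0
  have hgd : ∀ x ∈ Set.Ioi (0:ℝ),
      HasDerivAt g (c * x ^ (c-1) * f x + x ^ c * deriv f x) x := by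
    intro x hx
    have h1 : HasDerivAt (fun w : ℝ => w ^ c) (c * x ^ (c-1)) x :=
      Real.hasDerivAt_rpow_const (Or.inl (ne_of_gt hx))
    exact h1.mul ((hfd x).hasDerivAt)
  set φ : ℝ → ℝ := fun x => c * x ^ (c-1) * f x + x ^ c * deriv f x with hφ
  have hEq : deriv g =ᶠ[nhds z] φ := by
    filter_upwards [Ioi_mem_nhds hz] with x hx using (hgd x hx).deriv
  -- derivative of φ at z
  have hφd : HasDerivAt φ
      (c * (c-1) * z ^ (c-2) * f z + 2 * c * z ^ (c-1) * deriv f z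
        + z ^ c * deriv (deriv f) z) z := by
    have h1 : HasDerivAt (fun w : ℝ => w ^ (c-1)) ((c-1) * z ^ (c-1-1)) z :=
      Real.hasDerivAt_rpow_const (Or.inl hz0)
    have h2 : HasDerivAt (fun w : ℝ => w ^ c) (c * z ^ (c-1)) z :=
      Real.hasDerivAt_rpow_const (Or.inl hz0)
    have hfz : HasDerivAt f (deriv f z) z := (hfd z).hasDerivAt
    have hfz' : HasDerivAt (deriv f) (deriv (deriv f) z) z :=
      (hfd' z).hasDerivAt
    have := ((h1.const_mul c).mul hfz).add (h2.mul hfz')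
    refine this.congr_deriv ?_
    rw [show c - 1 - 1 = c - 2 by ring]; ring
  have hderiv2 : deriv (deriv g) z
      = c * (c-1) * z ^ (c-2) * f z + 2 * c * z ^ (c-1) * deriv f z
        + z ^ c * deriv (deriv f) z := by
    rw [hEq.deriv_eq]; exact hφd.deriv
  have hderiv1 : deriv g z = c * z ^ (c-1) * f z + z ^ c * deriv f z :=
    (hgd z hz).deriv
  -- D1 (D1 g) z = z * (deriv g z + z * deriv (deriv g) z)
  have hD1D1 : deriv (fun w => w * deriv g w) z
      = deriv g z + z * deriv (deriv g) z := by
    have hEq2 : (fun w => w * deriv g w) =ᶠ[nhds z] (fun w => w * φ w) := by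
      filter_upwards [hEq] with x hx; rw [hx]
    have h := ((hasDerivAt_id z).mul hφd).deriv
    simp only [id_eq, one_mul] at h
    rw [hEq2.deriv_eq, show deriv (fun w => w * φ w) z = _ from h, hEq.self_of_nhds, hderiv2]
  -- unfold everything
  simp only [Babs, D1, D2s]
  have hD1g : D1 g = fun w => w * deriv g w := rfl
  rw [hD1g, hD1D1, hderiv1, hderiv2]
  -- rpow arithmetic
  have hA : (0:ℝ) < z ^ c := Real.rpow_pos_of_pos hz c
  have e1 : z ^ (c - 1) = z ^ c / z := by
    rw [Real.rpow_sub hz, Real.rpow_one]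
  have e2 : z ^ (c - 2) = z ^ c / z ^ 2 := by
    rw [Real.rpow_sub hz]
    norm_num [Real.rpow_two]
  have e3 : z ^ (-(s:ℝ)/2) = (z ^ c)⁻¹ := by
    rw [neg_div, ← hc, ← Real.rpow_neg hz.le]
  rw [e1, e2, e3, hc]
  have h2 : ((s:ℝ)/2) * 2 = (s:ℝ) := by ring
  field_simp
  ring
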